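/- The cylindrical two-point function h and the irreducible two-point function f satisfy the Ornstein–Zernike renewal equation: for every k = (k_x, k_y) ∈ N × Z^{d-1} with k_x ≥ 1, h(k) = Σ_{i=1}^{k_x} Σ_{l ∈ Z^{d-1}} f(i,l) · h(k_x - i, k_y - l). -/

import Mathlib

open scoped ENNReal

/-- The lattice `ℤ × ℤ^{d-1}`, the first coordinate singled out. -/
abbrev ZLat (m : ℕ) := ℤ × (Fin m → ℤ)

/-- `ℓ^1`-distance on the lattice. -/
def latDist {m : ℕ} (x y : ZLat m) : ℤ := |x.1 - y.1| + ∑ i, |x.2 i - y.2 i|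

/-- `ℓ^1`-norm on the lattice, as a real number. -/
noncomputable def latNorm {m : ℕ} (x : ZLat m) : ℝ := |(x.1 : ℝ)| + ∑ i, |((x.2 i : ℤ) : ℝ)|

/-- An `N`-step self-avoiding walk beginning at `0`. -/
def IsWalk (m N : ℕ) (ω : Fin (N + 1) → ZLat m) : Prop :=
  ω 0 = 0 ∧ Function.Injective ω ∧
    ∀ j : Fin N, latDist (ω j.castSucc) (ω j.succ) = 1

/-- A bridge beginning at `0`: `ω_1(0) < ω_1(j) ≤ ω_1(N)` for all `j ≠ 0`. -/
def IsBridge (m N : ℕ) (ω : Fin (N + 1) → ZLat m) : Prop :=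
  IsWalk m N ω ∧ ∀ j : Fin (N + 1), j ≠ 0 → 0 < (ω j).1 ∧ (ω j).1 ≤ (ω (Fin.last N)).1

/-- `k` is a break point of the bridge `ω`. -/
def IsBreakPt (m N : ℕ) (ω : Fin (N + 1) → ZLat m) (k : ℤ) : Prop :=
  0 < k ∧ k < (ω (Fin.last N)).1 ∧
    ∃ r : Fin (N + 1), ∀ j : Fin (N + 1), (j ≤ r → (ω j).1 ≤ k) ∧ (r < j → k < (ω j).1)

/-- An irreducible bridge: a bridge with no break points. -/
def IsIrredBridge (m N : ℕ) (ω : Fin (N + 1) → ZLat m) : Prop :=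
  IsBridge m N ω ∧ ¬∃ k : ℤ, IsBreakPt m N ω k

/-- The number of `N`-step bridges from `0` to `x`. -/
noncomputable def bridgeCount (m N : ℕ) (x : ZLat m) : ℕ :=
  Nat.card {ω : Fin (N + 1) → ZLat m // IsBridge m N ω ∧ ω (Fin.last N) = x}

/-- The number of `N`-step irreducible bridges from `0` to `x`. -/
noncomputable def irredCount (m N : ℕ) (x : ZLat m) : ℕ :=
  Nat.card {ω : Fin (N + 1) → ZLat m // IsIrredBridge m N ω ∧ ω (Fin.last N) = x}

/-- The cylindrical two-point function `h(x) = Σ_{bridges 0 → x} e^{-β|ω|}`. -/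
noncomputable def hGen (m : ℕ) (β : ℝ) (x : ZLat m) : ℝ≥0∞ :=
  ∑' N : ℕ, (bridgeCount m N x : ℝ≥0∞) * ENNReal.ofReal (Real.exp (-β * N))

/-- The irreducible two-point function `f(x) = Σ_{irreducible bridges 0 → x} e^{-β|ω|}`. -/
noncomputable def fGen (m : ℕ) (β : ℝ) (x : ZLat m) : ℝ≥0∞ :=
  ∑' N : ℕ, (irredCount m N x : ℝ≥0∞) * ENNReal.ofReal (Real.exp (-β * N))

/-- `p` is a regeneration point of `ω`: `p = ω(t)` where `t` is the last visit to the
break level `p.1`, the walk lying at level `≤ p.1` before time `t` and `> p.1` after. -/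
def IsRegPt (m N : ℕ) (ω : Fin (N + 1) → ZLat m) (p : ZLat m) : Prop :=
  ∃ t : Fin (N + 1), ω t = p ∧ 0 < p.1 ∧ p.1 < (ω (Fin.last N)).1 ∧
    (∀ j : Fin (N + 1), j ≤ t → (ω j).1 ≤ p.1) ∧
    ∀ j : Fin (N + 1), t < j → p.1 < (ω j).1

namespace OZProof

variable {m : ℕ}

noncomputable def E (β : ℝ) (N : ℕ) : ℝ≥0∞ := ENNReal.ofReal (Real.exp (-β * N))

lemma E_mul (β : ℝ) (a b : ℕ) : E β a * E β b = E β (a + b) := by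
  unfold E
  rw [← ENNReal.ofReal_mul (Real.exp_nonneg _), ← Real.exp_add]
  congr 2
  push_cast
  ring

lemma latDist_comp {x y : ZLat m} (h : latDist x y = 1) :
    |x.1 - y.1| ≤ 1 ∧ ∀ i, |x.2 i - y.2 i| ≤ 1 := by
  have hs : (0:ℤ) ≤ ∑ i, |x.2 i - y.2 i| := Finset.sum_nonneg fun i _ => abs_nonneg _
  have h0 : (0:ℤ) ≤ |x.1 - y.1| := abs_nonneg _
  unfold latDist at h
  refine ⟨by linarith, fun i => ?_⟩
  have hi := Finset.single_le_sum (f := fun i => |x.2 i - y.2 i|)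
    (fun i _ => abs_nonneg _) (Finset.mem_univ i)
  linarith

lemma latDist_add (a x y : ZLat m) : latDist (a + x) (a + y) = latDist x y := by
  unfold latDist
  simp [Prod.fst_add, Prod.snd_add, add_sub_add_left_eq_sub]

lemma latDist_sub (a x y : ZLat m) : latDist (x - a) (y - a) = latDist x y := by
  unfold latDist
  simp [Prod.fst_sub, Prod.snd_sub, sub_sub_sub_cancel_right]

lemma walk_bound {N : ℕ} {ω : Fin (N+1) → ZLat m} (hω : IsWalk m N ω) (j : Fin (N+1)) :
    |(ω j).1| ≤ (j.1 : ℤ) ∧ ∀ i, |(ω j).2 i| ≤ (j.1 : ℤ) := by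
  induction j using Fin.induction with
  | zero => simp [hω.1]
  | succ j ih =>
    obtain ⟨h1, h2⟩ := latDist_comp (hω.2.2 j)
    have key : ∀ a b : ℤ, |a - b| ≤ 1 → |b| ≤ (j.1 : ℤ) → |a| ≤ ((j.1 : ℤ) + 1) := by
      intro a b hab hb
      have h3 := abs_add_le (a - b) b
      rw [sub_add_cancel] at h3
      linarith
    constructor
    · have := key _ _ (by rw [abs_sub_comm]; exact h1) ih.1
      simpa [Fin.val_succ, Fin.coe_castSucc] using this
    · intro i
      have := key _ _ (by rw [abs_sub_comm]; exact h2 i) (ih.2 i)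
      simpa [Fin.val_succ, Fin.coe_castSucc] using this

end OZProof
namespace OZProof

variable {m : ℕ}

lemma finite_pred (N : ℕ) (P : (Fin (N+1) → ZLat m) → Prop)
    (hP : ∀ ω, P ω → IsWalk m N ω) : Finite {ω // P ω} := by
  have hbox : ((Set.Icc (-(N:ℤ)) N) ×ˢ
      (Set.pi Set.univ fun _ : Fin m => Set.Icc (-(N:ℤ)) (N:ℤ))).Finite :=
    (Set.finite_Icc _ _).prod (Set.Finite.pi fun _ => Set.finite_Icc _ _)
  have main : {ω : Fin (N+1) → ZLat m | P ω}.Finite := by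
    apply (Set.Finite.pi fun _ : Fin (N+1) => hbox).subset
    intro ω hω
    rw [Set.mem_univ_pi]
    intro j
    obtain ⟨h1, h2⟩ := walk_bound (hP ω hω) j
    have hj : (j.1 : ℤ) ≤ (N : ℤ) := by exact_mod_cast Nat.le_of_lt_succ j.2
    constructor
    · rw [Set.mem_Icc]
      have := abs_le.mp h1
      constructor <;> linarith [this.1, this.2]
    · rw [Set.mem_univ_pi]
      intro i
      rw [Set.mem_Icc]
      have := abs_le.mp (h2 i)
      constructor <;> linarith [this.1, this.2]
  exact main.to_subtype

abbrev BT (m N : ℕ) (x : ZLat m) :=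
  {ω : Fin (N + 1) → ZLat m // IsBridge m N ω ∧ ω (Fin.last N) = x}
abbrev IT (m N : ℕ) (x : ZLat m) :=
  {ω : Fin (N + 1) → ZLat m // IsIrredBridge m N ω ∧ ω (Fin.last N) = x}

instance (N : ℕ) (x : ZLat m) : Finite (BT m N x) :=
  finite_pred N _ (fun ω h => h.1.1)
instance (N : ℕ) (x : ZLat m) : Finite (IT m N x) :=
  finite_pred N _ (fun ω h => h.1.1.1)

lemma tsum_const_card (α : Type*) [Finite α] (c : ℝ≥0∞) :
    ∑' _ : α, c = (Nat.card α : ℝ≥0∞) * c := by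
  have := Fintype.ofFinite α
  rw [tsum_fintype, Finset.sum_const, Nat.card_eq_fintype_card, Finset.card_univ, nsmul_eq_mul]

lemma hGen_eq (β : ℝ) (x : ZLat m) :
    hGen m β x = ∑' σ : Σ N, BT m N x, E β σ.1 := by
  rw [ENNReal.tsum_sigma' (fun σ : Σ N, BT m N x => E β σ.1)]
  unfold hGen
  refine tsum_congr fun N => ?_
  exact (tsum_const_card (BT m N x) (E β N)).symm

lemma fGen_eq (β : ℝ) (x : ZLat m) :
    fGen m β x = ∑' σ : Σ N, IT m N x, E β σ.1 := by
  rw [ENNReal.tsum_sigma' (fun σ : Σ N, IT m N x => E β σ.1)]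
  unfold fGen
  refine tsum_congr fun N => ?_
  exact (tsum_const_card (IT m N x) (E β N)).symm

lemma tsum_mul_tsum {α β : Type*} (f : α → ℝ≥0∞) (g : β → ℝ≥0∞) :
    (∑' a, f a) * (∑' b, g b) = ∑' p : α × β, f p.1 * g p.2 := by
  rw [ENNReal.tsum_prod']
  rw [← ENNReal.tsum_mul_right]
  exact tsum_congr fun a => (ENNReal.tsum_mul_left).symm

end OZProof
namespace OZProof

variable {m : ℕ}

lemma bridge_lvl {N : ℕ} {ω : Fin (N+1) → ZLat m} (h : IsBridge m N ω) (j : Fin (N+1)) :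
    0 ≤ (ω j).1 ∧ (ω j).1 ≤ (ω (Fin.last N)).1 := by
  rcases eq_or_ne j 0 with rfl | hj
  · rw [h.1.1]
    refine ⟨le_rfl, ?_⟩
    rcases eq_or_ne (Fin.last N) 0 with he | he
    · rw [he, h.1.1]
    · simpa using (h.2 _ he).1.le
  · obtain ⟨h1, h2⟩ := h.2 j hj
    exact ⟨h1.le, h2⟩

def cat (N1 N2 : ℕ) (ω1 : Fin (N1+1) → ZLat m) (ω2 : Fin (N2+1) → ZLat m)
    (j : Fin (N1+N2+1)) : ZLat m :=
  if h : (j : ℕ) ≤ N1 then ω1 ⟨j, by omega⟩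
  else ω1 (Fin.last N1) + ω2 ⟨(j : ℕ) - N1, by have := j.2; omega⟩

lemma cat_low {N1 N2 : ℕ} {ω1 : Fin (N1+1) → ZLat m} {ω2 : Fin (N2+1) → ZLat m}
    (j : Fin (N1+N2+1)) (hj : (j : ℕ) ≤ N1) :
    cat N1 N2 ω1 ω2 j = ω1 ⟨j, by omega⟩ := dif_pos hj

lemma cat_high {N1 N2 : ℕ} {ω1 : Fin (N1+1) → ZLat m} {ω2 : Fin (N2+1) → ZLat m}
    (h0 : ω2 0 = 0) (j : Fin (N1+N2+1)) (hj : N1 ≤ (j : ℕ)) :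
    cat N1 N2 ω1 ω2 j = ω1 (Fin.last N1) + ω2 ⟨(j : ℕ) - N1, by have := j.2; omega⟩ := by
  by_cases h : (j : ℕ) ≤ N1
  · have hjN : (j : ℕ) = N1 := le_antisymm h hj
    rw [cat, dif_pos h]
    have e2 : (⟨(j : ℕ) - N1, by have := j.2; omega⟩ : Fin (N2+1)) = 0 :=
      Fin.ext (by simp [hjN])
    rw [e2, h0, add_zero]
    exact congrArg ω1 (Fin.ext (by simpa using hjN))
  · rw [cat, dif_neg h]

lemma cat_isBridge {N1 N2 : ℕ} {ω1 : Fin (N1+1) → ZLat m} {ω2 : Fin (N2+1) → ZLat m}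
    (h1 : IsBridge m N1 ω1) (h2 : IsBridge m N2 ω2) :
    IsBridge m (N1+N2) (cat N1 N2 ω1 ω2) ∧
      cat N1 N2 ω1 ω2 (Fin.last (N1+N2)) = ω1 (Fin.last N1) + ω2 (Fin.last N2) := by
  have h20 : ω2 0 = 0 := h2.1.1
  have hend : cat N1 N2 ω1 ω2 (Fin.last (N1+N2)) = ω1 (Fin.last N1) + ω2 (Fin.last N2) := by
    rw [cat_high h20 (Fin.last (N1+N2)) (by simp)]
    congr 1
    exact congrArg ω2 (Fin.ext (by simp))
  have hzero : cat N1 N2 ω1 ω2 0 = 0 := by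
    rw [cat_low 0 (by simp)]
    rw [show (⟨((0 : Fin (N1+N2+1)) : ℕ), by simp⟩ : Fin (N1+1)) = 0 from Fin.ext (by simp),
      h1.1.1]
  have hinj : Function.Injective (cat N1 N2 ω1 ω2) := by
    intro a b hab
    by_cases ha : (a : ℕ) ≤ N1 <;> by_cases hb : (b : ℕ) ≤ N1
    · rw [cat_low a ha, cat_low b hb] at hab
      have := h1.1.2.1 hab
      exact Fin.ext (by simpa [Fin.ext_iff] using this)
    · exfalso
      rw [cat_low a ha, cat_high h20 b (by omega)] at hab
      have hle : (ω1 ⟨(a : ℕ), by omega⟩).1 ≤ (ω1 (Fin.last N1)).1 := (bridge_lvl h1 _).2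
      have hpos : 0 < (ω2 ⟨(b : ℕ) - N1, by have := b.2; omega⟩).1 := by
        refine (h2.2 _ ?_).1
        simp only [ne_eq, Fin.ext_iff, Fin.val_zero]
        omega
      have := congrArg Prod.fst hab
      simp only [Prod.fst_add] at this
      linarith [this]
    · exfalso
      rw [cat_low b hb, cat_high h20 a (by omega)] at hab
      have hle : (ω1 ⟨(b : ℕ), by omega⟩).1 ≤ (ω1 (Fin.last N1)).1 := (bridge_lvl h1 _).2
      have hpos : 0 < (ω2 ⟨(a : ℕ) - N1, by have := a.2; omega⟩).1 := by
        refine (h2.2 _ ?_).1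
        simp only [ne_eq, Fin.ext_iff, Fin.val_zero]
        omega
      have := congrArg Prod.fst hab
      simp only [Prod.fst_add] at this
      linarith [this]
    · rw [cat_high h20 a (by omega), cat_high h20 b (by omega)] at hab
      have := h2.1.2.1 (add_left_cancel hab)
      have hv : (a : ℕ) - N1 = (b : ℕ) - N1 := by simpa [Fin.ext_iff] using this
      exact Fin.ext (by omega)
  have hstep : ∀ j : Fin (N1+N2),
      latDist (cat N1 N2 ω1 ω2 j.castSucc) (cat N1 N2 ω1 ω2 j.succ) = 1 := by
    intro j
    by_cases hj : (j : ℕ) + 1 ≤ N1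
    · rw [cat_low j.castSucc (by simp; omega), cat_low j.succ (by simp [Fin.val_succ]; omega)]
      have := h1.1.2.2 ⟨(j : ℕ), by omega⟩
      convert this using 2 <;> rfl
    · rw [cat_high h20 j.castSucc (by simp; omega),
        cat_high h20 j.succ (by simp [Fin.val_succ]; omega)]
      rw [latDist_add]
      have key := h2.1.2.2 ⟨(j : ℕ) - N1, by have := j.2; omega⟩
      convert key using 2
      · rfl
      exact congrArg ω2 (Fin.ext (show (j : ℕ) + 1 - N1 = (j : ℕ) - N1 + 1 by omega))
  refine ⟨⟨⟨hzero, hinj, hstep⟩, ?_⟩, hend⟩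
  intro j hj
  have hendlvl : (cat N1 N2 ω1 ω2 (Fin.last (N1+N2))).1
      = (ω1 (Fin.last N1)).1 + (ω2 (Fin.last N2)).1 := by rw [hend]; rfl
  by_cases h : (j : ℕ) ≤ N1
  · rw [cat_low j h]
    have hne : (⟨(j : ℕ), by omega⟩ : Fin (N1+1)) ≠ 0 := by
      simp only [ne_eq, Fin.ext_iff, Fin.val_zero]
      exact fun h => hj (Fin.ext h)
    obtain ⟨ha, hb⟩ := h1.2 _ hne
    have h2l := (bridge_lvl h2 (Fin.last N2)).1
    rw [hendlvl]
    exact ⟨ha, by linarith⟩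
  · rw [cat_high h20 j (by omega)]
    have hne : (⟨(j : ℕ) - N1, by have := j.2; omega⟩ : Fin (N2+1)) ≠ 0 := by
      simp only [ne_eq, Fin.ext_iff, Fin.val_zero]
      omega
    obtain ⟨ha, hb⟩ := h2.2 _ hne
    have h1l := (bridge_lvl h1 (Fin.last N1)).1
    rw [hendlvl]
    constructor
    · simp only [Prod.fst_add]; linarith
    · simp only [Prod.fst_add]; linarith

end OZProof
namespace OZProof

variable {m : ℕ}

def valAt (N : ℕ) (ω : Fin (N+1) → ZLat m) (t : ℕ) : ℤ :=
  (ω ⟨min t N, Nat.lt_succ_of_le (Nat.min_le_right t N)⟩).1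

lemma valAt_eq {N t : ℕ} (ω : Fin (N+1) → ZLat m) (h2 : t < N + 1) :
    valAt N ω t = (ω ⟨t, h2⟩).1 := by
  simp only [valAt]
  exact congrArg (fun z => (ω z).1) (Fin.ext (min_eq_left (by omega)))

/-- `t` is a regeneration time of `ω`. -/
def RegT (N : ℕ) (ω : Fin (N+1) → ZLat m) (t : ℕ) : Prop :=
  ∀ j : Fin (N+1), ((j : ℕ) ≤ t → (ω j).1 ≤ valAt N ω t) ∧
    (t < (j : ℕ) → valAt N ω t < (ω j).1)

lemma regT_congr {n n' : ℕ} (hn : n = n') {f : Fin (n+1) → ZLat m} {g : Fin (n'+1) → ZLat m}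
    (hfg : ∀ (j : ℕ) (hj : j < n+1) (hj' : j < n'+1), f ⟨j, hj⟩ = g ⟨j, hj'⟩) (t : ℕ) :
    RegT n f t ↔ RegT n' g t := by
  subst hn
  have hfg' : f = g := funext fun j => hfg j.1 j.2 j.2
  rw [hfg']

lemma cat_reg {N1 N2 : ℕ} {ω1 : Fin (N1+1) → ZLat m} {ω2 : Fin (N2+1) → ZLat m}
    (h1 : IsBridge m N1 ω1) (h2 : IsBridge m N2 ω2) :
    RegT (N1+N2) (cat N1 N2 ω1 ω2) N1 := by
  have h20 : ω2 0 = 0 := h2.1.1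
  have hv : valAt (N1+N2) (cat N1 N2 ω1 ω2) N1 = (ω1 (Fin.last N1)).1 := by
    rw [valAt_eq _ (by omega), cat_low _ (le_refl N1)]
    rfl
  intro j
  constructor
  · intro hj
    rw [hv, cat_low j hj]
    exact (bridge_lvl h1 _).2
  · intro hj
    rw [hv, cat_high h20 j (by omega)]
    have hpos : 0 < (ω2 ⟨(j : ℕ) - N1, by have := j.2; omega⟩).1 := by
      refine (h2.2 _ ?_).1
      simp only [ne_eq, Fin.ext_iff, Fin.val_zero]
      omega
    simp only [Prod.fst_add]
    linarith

lemma cat_reg_min {N1 N2 : ℕ} {ω1 : Fin (N1+1) → ZLat m} {ω2 : Fin (N2+1) → ZLat m}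
    (h1 : IsIrredBridge m N1 ω1) (h2 : IsBridge m N2 ω2)
    {s : ℕ} (hs0 : 0 < s) (hs : s < N1) : ¬ RegT (N1+N2) (cat N1 N2 ω1 ω2) s := by
  intro hr
  apply h1.2
  have hcb := cat_isBridge h1.1 h2
  have hvs : valAt (N1+N2) (cat N1 N2 ω1 ω2) s = (ω1 ⟨s, by omega⟩).1 := by
    rw [valAt_eq _ (by omega), cat_low _ (show s ≤ N1 by omega)]
  refine ⟨(ω1 ⟨s, by omega⟩).1, ?_, ?_, ⟨s, by omega⟩, ?_⟩
  · -- 0 < level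
    have := (hcb.1.2 ⟨s, by omega⟩ (by simp only [ne_eq, Fin.ext_iff, Fin.val_zero]; omega)).1
    rwa [cat_low _ (show s ≤ N1 by omega)] at this
  · -- level < p.1
    have := (hr ⟨N1, by omega⟩).2 (show s < N1 by omega)
    rw [hvs, cat_low _ (le_refl N1)] at this
    exact this
  · intro j
    constructor
    · intro hj
      have hj' : (j : ℕ) ≤ s := by simpa [Fin.le_def] using hj
      have := (hr ⟨(j : ℕ), by have := j.2; omega⟩).1 hj'
      rw [hvs, cat_low _ (show (j : ℕ) ≤ N1 from by have := j.2; omega)] at this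
      exact this
    · intro hj
      have hj' : s < (j : ℕ) := by simpa [Fin.lt_def] using hj
      have := (hr ⟨(j : ℕ), by have := j.2; omega⟩).2 hj'
      rw [hvs, cat_low _ (show (j : ℕ) ≤ N1 from by have := j.2; omega)] at this
      exact this

end OZProof
namespace OZProof

variable {m : ℕ}

abbrev Tot (m : ℕ) (k : ZLat m) := Σ N, BT m N k

abbrev Q (m : ℕ) (k : ZLat m) (i : ℤ) (l : Fin m → ℤ) :=
  (Σ N1, IT m N1 (i, l)) × (Σ N2, BT m N2 (k.1 - i, k.2 - l))

abbrev Dec (m : ℕ) (k : ZLat m) :=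
  Σ (i : Finset.Icc (1 : ℤ) k.1) (l : Fin m → ℤ), Q m k (↑i) l

def catF (m : ℕ) (k : ZLat m) : Dec m k → Tot m k
  | ⟨⟨i, hi⟩, l, ⟨N1, ω1, hω1⟩, ⟨N2, ω2, hω2⟩⟩ =>
    ⟨N1 + N2, cat N1 N2 ω1 ω2, by
      obtain ⟨hb, he⟩ := cat_isBridge hω1.1.1 hω2.1
      refine ⟨hb, ?_⟩
      rw [he, hω1.2, hω2.2, Prod.mk_add_mk]
      refine Prod.ext ?_ ?_
      · simp
      · simp⟩

lemma tot_eq_elim {k : ZLat m} {n n' : ℕ} {f : Fin (n+1) → ZLat m} {g : Fin (n'+1) → ZLat m}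
    {pf : IsBridge m n f ∧ f (Fin.last n) = k} {pg : IsBridge m n' g ∧ g (Fin.last n') = k}
    (h : (⟨n, f, pf⟩ : Tot m k) = ⟨n', g, pg⟩) :
    n = n' ∧ ∀ (j : ℕ) (hj : j < n+1) (hj' : j < n'+1), f ⟨j, hj⟩ = g ⟨j, hj'⟩ := by
  obtain ⟨hn, hfg⟩ := Sigma.mk.inj_iff.mp h
  subst hn
  refine ⟨rfl, ?_⟩
  have hfg' : f = g := congrArg Subtype.val (eq_of_heq hfg)
  intro j hj hj'
  rw [hfg']

lemma tot_eq_intro {k : ZLat m} {n n' : ℕ} (hn : n = n') {f : Fin (n+1) → ZLat m}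
    {g : Fin (n'+1) → ZLat m}
    {pf : IsBridge m n f ∧ f (Fin.last n) = k} {pg : IsBridge m n' g ∧ g (Fin.last n') = k}
    (hfg : ∀ (j : ℕ) (hj : j < n+1) (hj' : j < n'+1), f ⟨j, hj⟩ = g ⟨j, hj'⟩) :
    (⟨n, f, pf⟩ : Tot m k) = ⟨n', g, pg⟩ := by
  subst hn
  have hfg' : f = g := funext fun j => hfg j.1 j.2 j.2
  subst hfg'
  rfl

lemma N1_pos {k : ZLat m} (i : ℤ) (hi : i ∈ Finset.Icc (1 : ℤ) k.1) (l : Fin m → ℤ)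
    {N1 : ℕ} (σ : IT m N1 (i, l)) : 0 < N1 := by
  rcases Nat.eq_zero_or_pos N1 with rfl | h
  · exfalso
    have h0 : σ.1 (Fin.last 0) = 0 := σ.2.1.1.1.1
    rw [σ.2.2] at h0
    have := congrArg Prod.fst h0
    simp at this
    rw [Finset.mem_Icc] at hi
    omega
  · exact h

lemma catF_inj (k : ZLat m) : Function.Injective (catF m k) := by
  rintro ⟨⟨i, hi⟩, l, ⟨N1, ω1, hω1⟩, ⟨N2, ω2, hω2⟩⟩
    ⟨⟨i', hi'⟩, l', ⟨N1', ω1', hω1'⟩, ⟨N2', ω2', hω2'⟩⟩ h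
  simp only [catF] at h
  obtain ⟨hn, hw⟩ := tot_eq_elim h
  have hN1 : 0 < N1 := N1_pos i hi l ⟨ω1, hω1⟩
  have hN1' : 0 < N1' := N1_pos i' hi' l' ⟨ω1', hω1'⟩
  -- N1 = N1'
  have hreg : RegT (N1+N2) (cat N1 N2 ω1 ω2) N1 := cat_reg hω1.1.1 hω2.1
  have hreg' : RegT (N1'+N2') (cat N1' N2' ω1' ω2') N1' := cat_reg hω1'.1.1 hω2'.1
  have hcongr := regT_congr (by omega : N1+N2 = N1'+N2') hw
  have hNN : N1 = N1' := by
    rcases lt_trichotomy N1 N1' with hlt | heq | hgt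
    · exact absurd ((hcongr N1).mp hreg) (cat_reg_min hω1'.1 hω2'.1 hN1 hlt)
    · exact heq
    · exact absurd ((hcongr N1').mpr hreg') (cat_reg_min hω1.1 hω2.1 hN1' hgt)
  subst hNN
  have hN2 : N2 = N2' := by omega
  subst hN2
  -- endpoints agree
  have hp : ((i : ℤ), l) = ((i' : ℤ), l') := by
    have h1 := hw N1 (by omega) (by omega)
    rw [cat_low _ (show N1 ≤ N1 from le_rfl), cat_low _ (show N1 ≤ N1 from le_rfl)] at h1
    rw [show (⟨N1, by omega⟩ : Fin (N1+1)) = Fin.last N1 from rfl] at h1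
    rw [hω1.2, hω1'.2] at h1
    exact h1
  obtain ⟨hii, hll⟩ := Prod.mk.inj hp
  subst hii
  subst hll
  -- first walks agree
  have hw1 : ω1 = ω1' := by
    funext j
    have := hw j.1 (by have := j.2; omega) (by have := j.2; omega)
    rwa [cat_low _ (show (j:ℕ) ≤ N1 from by have := j.2; omega),
      cat_low _ (show (j:ℕ) ≤ N1 from by have := j.2; omega)] at this
  subst hw1
  -- second walks agree
  have hw2 : ω2 = ω2' := by
    funext j
    have := hw (N1 + j.1) (by have := j.2; omega) (by have := j.2; omega)
    rw [cat_high hω2.1.1.1 _ (show N1 ≤ N1 + (j:ℕ) from by omega),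
      cat_high hω2'.1.1.1 _ (show N1 ≤ N1 + (j:ℕ) from by omega)] at this
    have h3 : ω2 ⟨N1 + (j:ℕ) - N1, by have := j.2; omega⟩
        = ω2' ⟨N1 + (j:ℕ) - N1, by have := j.2; omega⟩ := add_left_cancel this
    have e : (⟨N1 + (j:ℕ) - N1, by have := j.2; omega⟩ : Fin (N2+1)) = j :=
      Fin.ext (show N1 + (j:ℕ) - N1 = (j:ℕ) by omega)
    rw [e] at h3
    exact h3
  subst hw2
  rfl

end OZProof
namespace OZProof

variable {m : ℕ}

def takeW (N t : ℕ) (ht : t ≤ N) (ω : Fin (N+1) → ZLat m) : Fin (t+1) → ZLat m :=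
  fun j => ω ⟨j, by have := j.2; omega⟩

def dropW (N t : ℕ) (ht : t ≤ N) (ω : Fin (N+1) → ZLat m) : Fin (N-t+1) → ZLat m :=
  fun j => ω ⟨t + j, by have := j.2; omega⟩ - ω ⟨t, by omega⟩

lemma dropW_zero (N t : ℕ) (ht : t ≤ N) (ω : Fin (N+1) → ZLat m) :
    dropW N t ht ω 0 = 0 := by
  apply sub_eq_zero_of_eq
  exact congrArg ω (Fin.ext (by simp))

set_option maxHeartbeats 1000000 in
lemma cat_take_drop (N t : ℕ) (ht : t ≤ N) (ω : Fin (N+1) → ZLat m)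
    (j : Fin (t + (N-t) + 1)) :
    cat t (N-t) (takeW N t ht ω) (dropW N t ht ω) j
      = ω ⟨j, by have := j.2; omega⟩ := by
  by_cases hjt : (j : ℕ) ≤ t
  · rw [cat_low j hjt]
    rfl
  · rw [cat_high (dropW_zero N t ht ω) j (by omega)]
    show (ω ⟨t, by omega⟩ + (ω ⟨t + ((j:ℕ) - t), by have := j.2; omega⟩ - ω ⟨t, by omega⟩)
      = ω ⟨(j:ℕ), by have := j.2; omega⟩)
    rw [add_sub_cancel]
    exact congrArg ω (Fin.ext (show t + ((j:ℕ) - t) = (j:ℕ) by omega))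

set_option maxHeartbeats 2000000 in
lemma catF_surj (k : ZLat m) (hk : 1 ≤ k.1) : Function.Surjective (catF m k) := by
  classical
  rintro ⟨N, ω, hω, hend⟩
  have hN : 0 < N := by
    rcases Nat.eq_zero_or_pos N with rfl | h
    · exfalso
      have hk0 : k = 0 := by rw [← hend]; exact hω.1.1
      rw [hk0] at hk
      simp at hk
    · exact h
  have hex : ∃ s, 0 < s ∧ s ≤ N ∧ RegT N ω s := by
    refine ⟨N, hN, le_rfl, fun j => ⟨fun hj => ?_, fun hj => absurd hj (by have := j.2; omega)⟩⟩
    rw [valAt_eq _ (by omega)]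
    exact (bridge_lvl hω j).2
  set t := Nat.find hex with htdef
  obtain ⟨ht0, htN, htR⟩ := Nat.find_spec hex
  have hmin : ∀ s, (0 < s ∧ s ≤ N ∧ RegT N ω s) → t ≤ s := fun s hs => Nat.find_min' hex hs
  have ht' : t < N + 1 := by omega
  have hvt : valAt N ω t = (ω ⟨t, ht'⟩).1 := valAt_eq _ ht'
  have hne : (⟨t, ht'⟩ : Fin (N+1)) ≠ 0 := by
    simp only [ne_eq, Fin.ext_iff, Fin.val_zero]
    omega
  have hp1 : 0 < (ω ⟨t, ht'⟩).1 := (hω.2 _ hne).1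
  have hpk : (ω ⟨t, ht'⟩).1 ≤ k.1 := by
    have := (hω.2 _ hne).2
    rwa [hend] at this
  -- takeW is a walk
  have hw1 : IsWalk m t (takeW N t htN ω) := by
    refine ⟨?_, ?_, ?_⟩
    · exact (congrArg ω (Fin.ext (by simp))).trans hω.1.1
    · intro a b hab
      have := hω.1.2.1 hab
      exact Fin.ext (by simpa [Fin.ext_iff] using this)
    · intro j
      exact hω.1.2.2 ⟨j.1, by have := j.2; omega⟩
  -- takeW is a bridge
  have hb1 : IsBridge m t (takeW N t htN ω) := by
    refine ⟨hw1, fun j hj => ?_⟩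
    have hj0 : (j : ℕ) ≠ 0 := fun h => hj (Fin.ext h)
    have h1 := hω.2 ⟨j.1, by have := j.2; omega⟩
      (by simp only [ne_eq, Fin.ext_iff, Fin.val_zero]; omega)
    refine ⟨h1.1, ?_⟩
    have h2 := (htR ⟨j.1, by have := j.2; omega⟩).1 (show (j:ℕ) ≤ t from by have := j.2; omega)
    rw [hvt] at h2
    exact h2
  -- takeW is irreducible
  have hirr1 : IsIrredBridge m t (takeW N t htN ω) := by
    refine ⟨hb1, ?_⟩
    rintro ⟨i', hi'0, hi'lt, r', hr'⟩
    have hr't : r'.1 < t := by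
      by_contra hc
      have h1 := (hr' (Fin.last t)).1 (show t ≤ r'.1 by omega)
      exact absurd hi'lt (not_lt.mpr h1)
    have hrlt : r'.1 < N + 1 := by omega
    have hrlt2 : r'.1 + 1 < N + 1 := by omega
    have hle : (ω ⟨r'.1, hrlt⟩).1 ≤ i' := (hr' r').1 le_rfl
    have hgt : i' < (ω ⟨r'.1 + 1, hrlt2⟩).1 :=
      (hr' ⟨r'.1 + 1, by omega⟩).2 (show r'.1 < r'.1 + 1 by omega)
    have habs : |(ω ⟨r'.1, hrlt⟩).1 - (ω ⟨r'.1 + 1, hrlt2⟩).1| ≤ 1 :=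
      (latDist_comp (hω.1.2.2 ⟨r'.1, by omega⟩)).1
    have hae : (ω ⟨r'.1, hrlt⟩).1 = i' := by
      have h2 := abs_le.mp habs
      refine le_antisymm hle ?_
      linarith [h2.1, h2.2]
    have hr'0 : 0 < r'.1 := by
      rcases Nat.eq_zero_or_pos r'.1 with h0 | h
      · exfalso
        have e0 : (⟨r'.1, hrlt⟩ : Fin (N+1)) = 0 := Fin.ext (by simp [h0])
        rw [e0, hω.1.1] at hae
        simp at hae
        omega
      · exact h
    have hreg : RegT N ω r'.1 := by
      intro j
      refine ⟨fun hj => ?_, fun hj => ?_⟩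
      · rw [valAt_eq ω hrlt, hae]
        exact (hr' ⟨j.1, by omega⟩).1 (show (j:ℕ) ≤ r'.1 from hj)
      · rw [valAt_eq ω hrlt, hae]
        by_cases hjt : (j : ℕ) ≤ t
        · exact (hr' ⟨j.1, by omega⟩).2 (show r'.1 < (j:ℕ) from hj)
        · have h1 := (htR j).2 (by omega)
          rw [hvt] at h1
          have h2 : i' < (ω ⟨t, ht'⟩).1 := hi'lt
          linarith
    exact absurd (hmin r'.1 ⟨hr'0, by omega, hreg⟩) (by omega)
  -- dropW is a bridge
  have hb2 : IsBridge m (N - t) (dropW N t htN ω) := by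
    refine ⟨⟨dropW_zero N t htN ω, ?_, ?_⟩, ?_⟩
    · intro a b hab
      have h1 := sub_left_inj.mp hab
      have h2 := hω.1.2.1 h1
      have h3 : t + (a : ℕ) = t + (b : ℕ) := by simpa [Fin.ext_iff] using h2
      exact Fin.ext (by omega)
    · intro j
      have key := hω.1.2.2 ⟨t + j.1, by have := j.2; omega⟩
      show latDist (ω ⟨t + (j.castSucc : ℕ), _⟩ - ω ⟨t, _⟩)
        (ω ⟨t + (j.succ : ℕ), _⟩ - ω ⟨t, _⟩) = 1
      rw [latDist_sub]
      exact key
    · intro j hj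
      have hj0 : (j : ℕ) ≠ 0 := fun h => hj (Fin.ext h)
      have h1 := (htR ⟨t + j.1, by have := j.2; omega⟩).2 (show t < t + (j:ℕ) from by omega)
      rw [hvt] at h1
      constructor
      · exact sub_pos.mpr h1
      · have h2 : (ω ⟨t + (j:ℕ), by have := j.2; omega⟩).1
            ≤ (ω ⟨t + (N - t), by omega⟩).1 := by
          have h3 := (bridge_lvl hω ⟨t + (j:ℕ), by have := j.2; omega⟩).2
          have h4 : (ω (Fin.last N)).1 = (ω ⟨t + (N - t), by omega⟩).1 :=
            congrArg (fun z => (ω z).1) (Fin.ext (show N = t + (N - t) by omega))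
          rw [h4] at h3
          exact h3
        exact sub_le_sub_right h2 _
  -- endpoints
  have hdropend : dropW N t htN ω (Fin.last (N - t)) = k - ω ⟨t, ht'⟩ := by
    have h4 : ω ⟨t + (N - t), by omega⟩ = k := by
      rw [← hend]
      exact congrArg ω (Fin.ext (show t + (N - t) = N by omega))
    exact congrArg (fun z => z - ω ⟨t, ht'⟩) h4
  refine ⟨⟨⟨(ω ⟨t, ht'⟩).1, Finset.mem_Icc.mpr ⟨hp1, hpk⟩⟩, (ω ⟨t, ht'⟩).2,
    ⟨t, takeW N t htN ω, hirr1, rfl⟩,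
    ⟨N - t, dropW N t htN ω, hb2, hdropend.trans rfl⟩⟩, ?_⟩
  apply tot_eq_intro (show t + (N - t) = N by omega)
  intro j hj hj'
  exact cat_take_drop N t htN ω ⟨j, hj⟩

end OZProof
namespace OZProof

lemma catF_bij (m : ℕ) (k : ZLat m) (hk : 1 ≤ k.1) : Function.Bijective (catF m k) :=
  ⟨catF_inj k, catF_surj k hk⟩

end OZProof

open OZProof in
theorem oz_aux (m : ℕ) (β : ℝ) (k : ZLat m) (hk : 1 ≤ k.1) :
    hGen m β k =
      ∑ i ∈ Finset.Icc (1 : ℤ) k.1, ∑' l : Fin m → ℤ,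
        fGen m β (i, l) * hGen m β (k.1 - i, k.2 - l) := by
  classical
  calc hGen m β k = ∑' σ : Tot m k, E β σ.1 := hGen_eq β k
    _ = ∑' x : Dec m k, E β ((catF m k x).1) :=
        ((Equiv.ofBijective _ (catF_bij m k hk)).tsum_eq
          (fun σ : Tot m k => E β σ.1)).symm
    _ = ∑' x : Dec m k, E β x.2.2.1.1 * E β x.2.2.2.1 := by
        refine tsum_congr fun x => ?_
        rcases x with ⟨⟨i, hi⟩, l, ⟨N1, ω1, hω1⟩, ⟨N2, ω2, hω2⟩⟩
        exact (E_mul β N1 N2).symm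
    _ = ∑ i ∈ Finset.Icc (1 : ℤ) k.1, ∑' l : Fin m → ℤ,
        fGen m β (i, l) * hGen m β (k.1 - i, k.2 - l) := by
        rw [ENNReal.tsum_sigma'
          (fun x : Dec m k => E β x.2.2.1.1 * E β x.2.2.2.1)]
        rw [← Finset.tsum_subtype]
        refine tsum_congr fun i => ?_
        rw [ENNReal.tsum_sigma'
          (fun y : Σ l : Fin m → ℤ, Q m k (↑i) l => E β y.2.1.1 * E β y.2.2.1)]
        refine tsum_congr fun l => ?_
        rw [fGen_eq β ((i : ℤ), l), hGen_eq β (k.1 - ↑i, k.2 - l), OZProof.tsum_mul_tsum]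

/-- The Ornstein–Zernike renewal equation
`h(k) = Σ_{i=1}^{k_x} Σ_{l ∈ ℤ^{d-1}} f(i,l) h(k_x - i, k_y - l)`. -/
theorem ornstein_zernike_equation (m : ℕ) (β : ℝ) (k : ZLat m) (hk : 1 ≤ k.1) :
    hGen m β k =
      ∑ i ∈ Finset.Icc (1 : ℤ) k.1, ∑' l : Fin m → ℤ,
        fGen m β (i, l) * hGen m β (k.1 - i, k.2 - l) :=
  oz_aux m β k hk
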